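/- arXiv:0706.0309 — 2 statements merged into one kernel-verified Lean document; each statement's English description precedes it below -/
import Mathlib

section
/- For every n ≥ 3, the decycling number of the Cartesian product C₃ □ Cₙ equals n + 1: ∇(C₃ □ Cₙ) = n + 1. -/
open SimpleGraph

/-- `S` is a decycling set of `G` if the subgraph of `G` induced on the complement of `S`
is acyclic. -/
def SimpleGraph.IsDecyclingSet {V : Type*} (G : SimpleGraph V) (S : Set V) : Prop :=
  (G.induce Sᶜ).IsAcyclic

/-- The decycling number `∇(G)` of `G`: the minimum cardinality of a decycling set of `G`. -/
noncomputable def SimpleGraph.decyclingNumber {V : Type*} (G : SimpleGraph V) : ℕ :=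
  sInf {k | ∃ S : Set V, G.IsDecyclingSet S ∧ S.ncard = k}

/-!
`C₃ □ Cₙ` is 4-regular on `3n` vertices, so it has `6n` edges. Removing a decycling set `S`
destroys at most `4|S|` of them and leaves a forest on `3n - |S|` vertices, which has fewer than
`3n - |S|` edges; hence `6n < 3n + 3|S|`, i.e. `|S| ≥ n + 1`. Conversely, an explicit set of
`n + 1` vertices leaves a tree, certified by a parent map that decreases a rank function.
-/

open Finset

namespace SimpleGraph

variable {V : Type*} {G : SimpleGraph V}

/-- A vertex of maximal rank on a cycle would have two cycle neighbours of rank at most its own. -/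
theorem isAcyclic_of_subsingleton_adj_rank_le {α : Type*} [LinearOrder α] (f : V → α)
    (h : ∀ v, {u | G.Adj v u ∧ f u ≤ f v}.Subsingleton) : G.IsAcyclic := by
  classical
  intro v c hc
  obtain ⟨m, hm, hmax⟩ := c.support.toFinset.exists_max_image f ⟨v, by simp⟩
  rw [List.mem_toFinset] at hm
  obtain ⟨x, y, hxy, hnbrs⟩ := Set.ncard_eq_two.mp (hc.ncard_neighborSet_toSubgraph_eq_two hm)
  have hlow : ∀ w ∈ c.toSubgraph.neighborSet m, G.Adj m w ∧ f w ≤ f m := fun w hw =>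
    ⟨hw.adj_sub, hmax w (List.mem_toFinset.mpr (Walk.mem_support_of_adj_toSubgraph hw.symm))⟩
  exact hxy (h m (hlow x (by simp [hnbrs])) (hlow y (by simp [hnbrs])))

theorem IsAcyclic.ncard_edgeSet_lt [Finite V] [Nonempty V] (hG : G.IsAcyclic) :
    G.edgeSet.ncard < Nat.card V := by
  obtain ⟨T, hGT, -, hT⟩ := connected_top.exists_isTree_le_of_le_of_isAcyclic le_top hG
  have hTcard := (isTree_iff_connected_and_card.mp hT).2
  rw [Nat.card_coe_set_eq] at hTcard
  have := Set.ncard_le_ncard (edgeSet_mono hGT)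
  omega

theorem ncard_edgeSet_le_mul_ncard_add [Fintype V] [G.LocallyFinite] {S : Set V} {d : ℕ}
    (hd : ∀ v ∈ S, G.degree v ≤ d) :
    G.edgeSet.ncard ≤ d * S.ncard + (G.induce Sᶜ).edgeSet.ncard := by
  classical
  have hsub : G.edgeSet ⊆
      (⋃ v ∈ S.toFinset, G.incidenceSet v) ∪ Sym2.map Subtype.val '' (G.induce Sᶜ).edgeSet := by
    intro e he
    induction e with
    | _ x y =>
      by_cases hx : x ∈ S
      · exact Or.inl (Set.mem_biUnion (Set.mem_toFinset.mpr hx) ⟨he, Sym2.mem_mk_left x y⟩)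
      by_cases hy : y ∈ S
      · exact Or.inl (Set.mem_biUnion (Set.mem_toFinset.mpr hy) ⟨he, Sym2.mem_mk_right x y⟩)
      exact Or.inr ⟨s(⟨x, hx⟩, ⟨y, hy⟩), he, rfl⟩
  calc G.edgeSet.ncard
      ≤ (⋃ v ∈ S.toFinset, G.incidenceSet v).ncard +
          (Sym2.map Subtype.val '' (G.induce Sᶜ).edgeSet).ncard :=
        (Set.ncard_le_ncard hsub).trans (Set.ncard_union_le _ _)
    _ ≤ ∑ v ∈ S.toFinset, (G.incidenceSet v).ncard + (G.induce Sᶜ).edgeSet.ncard :=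
        add_le_add (S.toFinset.set_ncard_biUnion_le _) Set.ncard_image_le
    _ ≤ ∑ _ ∈ S.toFinset, d + (G.induce Sᶜ).edgeSet.ncard := by
        gcongr with v hv
        rw [← Nat.card_coe_set_eq, Nat.card_eq_fintype_card, card_incidenceSet_eq_degree]
        exact hd v (Set.mem_toFinset.mp hv)
    _ = d * S.ncard + (G.induce Sᶜ).edgeSet.ncard := by
        rw [sum_const, smul_eq_mul, ← Set.ncard_eq_toFinset_card', mul_comm]

theorem IsDecyclingSet.ncard_edgeSet_add_ncard_lt [Fintype V] [G.LocallyFinite] {S : Set V}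
    {d : ℕ} (hS : G.IsDecyclingSet S) (hSc : Sᶜ.Nonempty) (hd : ∀ v ∈ S, G.degree v ≤ d) :
    G.edgeSet.ncard + S.ncard < d * S.ncard + Fintype.card V := by
  have := hSc.to_subtype
  have hforest := IsAcyclic.ncard_edgeSet_lt hS
  rw [Nat.card_coe_set_eq, Set.ncard_compl, Nat.card_eq_fintype_card] at hforest
  have := ncard_edgeSet_le_mul_ncard_add hd
  have : S.ncard ≤ Fintype.card V := Nat.card_eq_fintype_card (α := V) ▸ Set.ncard_le_card S
  omega

theorem IsRegularOfDegree.two_mul_ncard_edgeSet [Fintype V] [G.LocallyFinite] {d : ℕ}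
    (hG : G.IsRegularOfDegree d) : 2 * G.edgeSet.ncard = d * Fintype.card V := by
  classical
  rw [← coe_edgeFinset, Set.ncard_coe_finset, ← sum_degrees_eq_twice_card_edges, mul_comm,
    ← card_univ]
  convert sum_const_nat fun v (_ : v ∈ univ) => hG.degree_eq v

theorem IsRegularOfDegree.boxProd {W : Type*} {H : SimpleGraph W} [G.LocallyFinite]
    [H.LocallyFinite] [(G □ H).LocallyFinite] {d e : ℕ} (hG : G.IsRegularOfDegree d)
    (hH : H.IsRegularOfDegree e) : (G □ H).IsRegularOfDegree (d + e) := fun x => by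
  rw [degree_boxProd, hG.degree_eq, hH.degree_eq]

theorem cycleGraph_isRegularOfDegree_two {n : ℕ} (hn : 3 ≤ n) :
    (cycleGraph n).IsRegularOfDegree 2 := by
  obtain ⟨m, rfl⟩ : ∃ m, n = m + 3 := ⟨n - 3, by omega⟩
  exact fun _ => cycleGraph_degree_three_le

theorem succ_le_ncard_of_isDecyclingSet_cycleGraph_three_boxProd {n : ℕ} (hn : 3 ≤ n)
    {S : Set (Fin 3 × Fin n)} (hS : (cycleGraph 3 □ cycleGraph n).IsDecyclingSet S) :
    n + 1 ≤ S.ncard := by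
  have hreg :=
    (cycleGraph_isRegularOfDegree_two le_rfl).boxProd (cycleGraph_isRegularOfDegree_two hn)
  have hedges := hreg.two_mul_ncard_edgeSet
  simp only [Fintype.card_prod, Fintype.card_fin] at hedges
  by_cases hSuniv : S = Set.univ
  · rw [hSuniv, Set.ncard_univ, Nat.card_eq_fintype_card, Fintype.card_prod, Fintype.card_fin,
      Fintype.card_fin]
    omega
  have := hS.ncard_edgeSet_add_ncard_lt (Set.nonempty_compl.mpr hSuniv)
    fun v _ => (hreg.degree_eq v).le
  simp only [Fintype.card_prod, Fintype.card_fin] at this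
  omega

theorem decyclingNumber_eq {S : Set V} {k : ℕ} (hS : G.IsDecyclingSet S) (hSk : S.ncard = k)
    (hmin : ∀ T, G.IsDecyclingSet T → k ≤ T.ncard) : G.decyclingNumber = k :=
  le_antisymm (Nat.sInf_le ⟨S, hS, hSk⟩)
    (le_csInf ⟨k, S, hS, hSk⟩ fun _ ⟨T, hT, hTk⟩ => hTk ▸ hmin T hT)

theorem val_consecutive_of_cycleGraph_adj {n : ℕ} {j k : Fin n} (h : (cycleGraph n).Adj j k) :
    (k : ℕ) = j + 1 ∨ (j : ℕ) = k + 1 ∨ ((j : ℕ) = 0 ∧ (k : ℕ) + 1 = n) ∨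
      ((k : ℕ) = 0 ∧ (j : ℕ) + 1 = n) := by
  have hsub : ∀ a b : Fin n, ((a - b : Fin n) : ℕ) = if b ≤ a then (a : ℕ) - b else n + a - b := by
    intro a b
    split_ifs with hba
    · exact Fin.coe_sub_iff_le.mpr hba
    · exact Fin.coe_sub_iff_lt.mpr (not_le.mp hba)
  rw [cycleGraph_adj', hsub, hsub] at h
  have := j.isLt
  have := k.isLt
  split_ifs at h <;> omega

end SimpleGraph

/-!
A vertex `(i, j)` of `C₃ □ Cₙ` has row `i : Fin 3` and column `j : Fin n`; the explicit work is
done on the values `(i, j) : ℕ × ℕ`. The decycling set consists of `(1, 0)` and one vertex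
`(removedRow j, j)` in each column. What remains is a tree rooted at `(0, 1)`: the path
`(0,1), (1,1), (1,2), (2,2), (2,3), …, (2,n-1), (2,0)`, plus a leaf `(1 - j % 2, j)` hanging off
`(2, j)` for each `j ≥ 3`. Along it, `rank` increases away from the root and `parent` points
towards it.
-/

namespace C3BoxCycle

def removedRow (j : ℕ) : ℕ := if j = 0 then 0 else if j = 1 then 2 else j % 2

theorem removedRow_lt_three (j : ℕ) : removedRow j < 3 := by
  unfold removedRow
  split_ifs <;> omega

def decyclingSet (n : ℕ) [NeZero n] : Set (Fin 3 × Fin n) :=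
  insert (1, 0) (Set.range fun j : Fin n => (⟨removedRow j, removedRow_lt_three j⟩, j))

theorem ncard_decyclingSet (n : ℕ) [NeZero n] : (decyclingSet n).ncard = n + 1 := by
  have hinj : Function.Injective
      fun j : Fin n => ((⟨removedRow j, removedRow_lt_three j⟩ : Fin 3), j) :=
    fun _ _ h => congrArg Prod.snd h
  rw [decyclingSet, Set.ncard_insert_of_notMem, Set.ncard_range_of_injective hinj, Nat.card_fin]
  rintro ⟨j, hj⟩
  obtain ⟨hrow, rfl⟩ := Prod.mk.inj hj
  simp [removedRow] at hrow

theorem val_of_notMem_decyclingSet {n : ℕ} [NeZero n] {v : Fin 3 × Fin n}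
    (hv : v ∉ decyclingSet n) :
    (v.1 : ℕ) ≠ removedRow v.2 ∧ ¬((v.1 : ℕ) = 1 ∧ (v.2 : ℕ) = 0) := by
  simp only [decyclingSet, Set.mem_insert_iff, Set.mem_range, not_or, not_exists] at hv
  exact ⟨fun h => hv.2 v.2 (Prod.ext (Fin.ext h.symm) rfl),
    fun h => hv.1 (Prod.ext (Fin.ext h.1) (Fin.ext h.2))⟩

theorem val_of_boxProd_cycleGraph_adj {n : ℕ} {v w : Fin 3 × Fin n}
    (h : (cycleGraph 3 □ cycleGraph n).Adj v w) :
    (v.1 : ℕ) = w.1 ∧ ((w.2 : ℕ) = v.2 + 1 ∨ (v.2 : ℕ) = w.2 + 1 ∨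
      ((v.2 : ℕ) = 0 ∧ (w.2 : ℕ) + 1 = n) ∨ ((w.2 : ℕ) = 0 ∧ (v.2 : ℕ) + 1 = n)) ∨
      (v.2 : ℕ) = w.2 ∧ (v.1 : ℕ) ≠ w.1 := by
  rcases boxProd_adj.mp h with ⟨hrow, hcol⟩ | ⟨hcol, hrow⟩
  · rw [cycleGraph_three_eq_top, top_adj] at hrow
    exact Or.inr ⟨congrArg Fin.val hcol, Fin.val_ne_of_ne hrow⟩
  · exact Or.inl ⟨congrArg Fin.val hrow, val_consecutive_of_cycleGraph_adj hcol⟩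

def rank (n i j : ℕ) : ℕ :=
  if i = 2 then (if j = 0 then n + 1 else j + 1)
  else if j = 1 then i
  else if i = 1 ∧ j = 2 then 2
  else j + 2

def parent (n i j : ℕ) : ℕ × ℕ :=
  if i = 2 then (if j = 2 then (1, 2) else (2, if j = 0 then n - 1 else j - 1))
  else if j = 1 then (0, 1)
  else if i = 1 ∧ j = 2 then (1, 1)
  else (2, j)

theorem parent_eq_of_adj {n i j i' j' : ℕ} (hn : 3 ≤ n) (hi : i < 3) (hi' : i' < 3)
    (hj : j < n) (hj' : j' < n)
    (hv : i ≠ removedRow j ∧ ¬(i = 1 ∧ j = 0)) (hu : i' ≠ removedRow j' ∧ ¬(i' = 1 ∧ j' = 0))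
    (hadj : i = i' ∧ (j' = j + 1 ∨ j = j' + 1 ∨ (j = 0 ∧ j' + 1 = n) ∨ (j' = 0 ∧ j + 1 = n)) ∨
      j = j' ∧ i ≠ i')
    (hle : rank n i' j' ≤ rank n i j) : parent n i j = (i', j') := by
  unfold removedRow at hv hu
  unfold rank at hle
  unfold parent
  split_ifs at * <;> simp only [Prod.mk.injEq] <;> omega

theorem isDecyclingSet_decyclingSet {n : ℕ} [NeZero n] (hn : 3 ≤ n) :
    (cycleGraph 3 □ cycleGraph n).IsDecyclingSet (decyclingSet n) := by
  refine isAcyclic_of_subsingleton_adj_rank_le (fun v => rank n v.1.1 v.1.2)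
    fun v u hu w hw => ?_
  have hparent : ∀ u : ↥(decyclingSet n)ᶜ,
      ((cycleGraph 3 □ cycleGraph n).induce (decyclingSet n)ᶜ).Adj v u →
      rank n u.1.1 u.1.2 ≤ rank n v.1.1 v.1.2 →
      parent n v.1.1 v.1.2 = ((u.1.1 : ℕ), (u.1.2 : ℕ)) := fun u hadj hle =>
    parent_eq_of_adj hn v.1.1.isLt u.1.1.isLt v.1.2.isLt u.1.2.isLt
      (val_of_notMem_decyclingSet v.2) (val_of_notMem_decyclingSet u.2)
      (val_of_boxProd_cycleGraph_adj hadj) hle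
  have huw := (hparent u hu.1 hu.2).symm.trans (hparent w hw.1 hw.2)
  simp only [Prod.mk.injEq] at huw
  exact Subtype.ext (Prod.ext (Fin.ext huw.1) (Fin.ext huw.2))

end C3BoxCycle

/-- For every `n ≥ 3`, `∇(C₃ □ Cₙ) = n + 1`. -/
theorem decyclingNumber_C3_boxProd_Cn (n : ℕ) (hn : 3 ≤ n) :
    (cycleGraph 3 □ cycleGraph n).decyclingNumber = n + 1 :=
  have : NeZero n := ⟨by omega⟩
  decyclingNumber_eq (C3BoxCycle.isDecyclingSet_decyclingSet hn)
    (C3BoxCycle.ncard_decyclingSet n)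
    fun _ => succ_le_ncard_of_isDecyclingSet_cycleGraph_three_boxProd hn
end

section
/- The decycling number of the Cartesian product C₄ □ C₄ equals 6: ∇(C₄ □ C₄) = 6. -/
open SimpleGraph

/-!
Lower bound: in a `d`-regular graph on `n` vertices, deleting a decycling set `S` destroys at most
`d |S|` of the `d n / 2` edges and leaves a forest on `n - |S|` vertices, which has at most
`n - |S| - 1` edges. For `C₄ □ C₄` (`d = 4`, `n = 16`) this gives `32 ≤ 15 + 3 |S|`, so `|S| ≥ 6`.

Upper bound: deleting `(0,0), (1,1), (1,3), (2,2), (3,1), (3,3)` leaves two stars, centred at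
`(0,2)` and `(2,0)`. Acyclicity is certified by the lexicographic order, in which every remaining
vertex has at most one smaller neighbour: the largest vertex of a cycle would have two.
-/

open Finset

namespace SimpleGraph

variable {V : Type*} {G : SimpleGraph V}

theorem isAcyclic_of_injective_of_lower_neighbor_unique {α : Type*} [LinearOrder α] (f : V → α)
    (hf : Function.Injective f)
    (hlower : ∀ v w w', G.Adj v w → G.Adj v w' → f w < f v → f w' < f v → w = w') :
    G.IsAcyclic := by
  classical
  intro u c hc
  obtain ⟨v, hv, hmax⟩ := exists_max_image c.support.toFinset f ⟨u, by simp⟩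
  rw [List.mem_toFinset] at hv
  set c' := c.rotate v hv
  have hc' : c'.IsCycle := hc.rotate hv
  have below : ∀ w ∈ c'.support, G.Adj v w → f w < f v := fun w hw hadj =>
    (hmax w (by simpa [c'] using hw)).lt_of_ne (hf.ne hadj.ne.symm)
  have hsnd := c'.adj_snd hc'.not_nil
  have hpen := (c'.adj_penultimate hc'.not_nil).symm
  exact hc'.snd_ne_penultimate <| hlower v _ _ hsnd hpen
    (below _ (Walk.getVert_mem_support _ _) hsnd) (below _ (Walk.getVert_mem_support _ _) hpen)

theorem IsAcyclic.card_edgeFinset_add_one_le [Fintype V] [Nonempty V] [Fintype G.edgeSet]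
    (hG : G.IsAcyclic) : #G.edgeFinset + 1 ≤ Fintype.card V := by
  obtain ⟨T, hGT, -, hT⟩ := connected_top.exists_isTree_le_of_le_of_isAcyclic le_top hG
  classical
  rw [← hT.card_edgeFinset]
  gcongr

theorem card_edgeFinset_le_card_edgeFinset_induce_add_sum_degree [Fintype V] [DecidableEq V]
    [DecidableRel G.Adj] (s : Finset V) :
    #G.edgeFinset ≤ #(G.induce ↑s).edgeFinset + ∑ v ∈ sᶜ, G.degree v := by
  rw [← card_filter_edgeFinset_toFinset_subset,
    ← card_filter_add_card_filter_not (fun e : Sym2 V => e.toFinset ⊆ s)]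
  gcongr
  calc #{e ∈ G.edgeFinset | ¬ e.toFinset ⊆ s}
      ≤ #(sᶜ.biUnion fun v => G.incidenceFinset v) := card_le_card fun e he => by
        induction e with | h x y => ?_
        obtain ⟨hxy, hout⟩ : G.Adj x y ∧ ¬ s(x, y).toFinset ⊆ s := by simpa using he
        simp only [Sym2.toFinset_mk_eq, insert_subset_iff, singleton_subset_iff, not_and_or] at hout
        simp only [mem_biUnion, mem_compl, mem_incidenceFinset, mk'_mem_incidenceSet_iff]
        rcases hout with hx | hy
        · exact ⟨x, hx, hxy, Or.inl rfl⟩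
        · exact ⟨y, hy, hxy, Or.inr rfl⟩
    _ ≤ ∑ v ∈ sᶜ, #(G.incidenceFinset v) := card_biUnion_le
    _ = ∑ v ∈ sᶜ, G.degree v := by simp only [card_incidenceFinset_eq_degree]

theorem IsRegularOfDegree.card_add_le_of_isDecyclingSet [Fintype V] [DecidableRel G.Adj] {d : ℕ}
    (hG : G.IsRegularOfDegree d) {S : Set V} (hS : G.IsDecyclingSet S) (hSc : Sᶜ.Nonempty) :
    d * Fintype.card V + 2 * S.ncard + 2 ≤ 2 * Fintype.card V + 2 * d * S.ncard := by
  classical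
  set s := S.toFinsetᶜ
  have hs : (↑s : Set V) = Sᶜ := by simp [s]
  have : Nonempty (↑s : Set V) := hs ▸ hSc.to_subtype
  have hforest : #(G.induce ↑s).edgeFinset + 1 ≤ #s := by
    simpa using IsAcyclic.card_edgeFinset_add_one_le (hs ▸ hS : (G.induce ↑s).IsAcyclic)
  have hsplit := G.card_edgeFinset_le_card_edgeFinset_induce_add_sum_degree s
  have hedges : 2 * #G.edgeFinset = d * Fintype.card V := by
    rw [← sum_degrees_eq_twice_card_edges]
    simp [hG.degree_eq, mul_comm]
  have hdeg : ∑ v ∈ sᶜ, G.degree v = d * S.ncard := by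
    simp [s, hG.degree_eq, Set.ncard_eq_toFinset_card', mul_comm]
  have hcard : #s + S.ncard = Fintype.card V := by
    rw [Set.ncard_eq_toFinset_card', card_compl, Nat.sub_add_cancel (card_le_univ _)]
  linarith

instance {α β : Type*} [DecidableEq α] [DecidableEq β] (G : SimpleGraph α) (H : SimpleGraph β)
    [DecidableRel G.Adj] [DecidableRel H.Adj] : DecidableRel (G □ H).Adj :=
  fun _ _ => decidable_of_iff' _ boxProd_adj

end SimpleGraph

def c4BoxProdC4DecyclingSet : Finset (Fin 4 × Fin 4) :=
  {(0, 0), (1, 1), (1, 3), (2, 2), (3, 1), (3, 3)}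

set_option synthInstance.maxSize 1000 in
theorem isDecyclingSet_c4BoxProdC4DecyclingSet :
    (cycleGraph 4 □ cycleGraph 4).IsDecyclingSet ↑c4BoxProdC4DecyclingSet := by
  refine isAcyclic_of_injective_of_lower_neighbor_unique (fun x => toLex x.1)
    (toLex.injective.comp Subtype.val_injective) ?_
  simp only [Subtype.forall, Set.mem_compl_iff, mem_coe, comap_adj,
    Function.Embedding.subtype_apply, Subtype.mk.injEq]
  decide

theorem six_le_ncard_of_isDecyclingSet_C4_boxProd_C4 {S : Set (Fin 4 × Fin 4)}
    (hS : (cycleGraph 4 □ cycleGraph 4).IsDecyclingSet S) : 6 ≤ S.ncard := by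
  by_cases hSc : Sᶜ.Nonempty
  · have hbound := IsRegularOfDegree.card_add_le_of_isDecyclingSet (d := 2 + 2)
      (fun v => by rw [degree_boxProd, cycleGraph_degree_three_le, cycleGraph_degree_three_le])
      hS hSc
    simp only [Fintype.card_prod, Fintype.card_fin] at hbound
    omega
  · rw [Set.not_nonempty_iff_eq_empty, Set.compl_empty_iff] at hSc
    simp [hSc]

/-- `∇(C₄ □ C₄) = 6`. -/
theorem decyclingNumber_C4_boxProd_C4 :
    (cycleGraph 4 □ cycleGraph 4).decyclingNumber = 6 := by
  have hmem : 6 ∈ {k | ∃ S : Set (Fin 4 × Fin 4),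
      (cycleGraph 4 □ cycleGraph 4).IsDecyclingSet S ∧ S.ncard = k} :=
    ⟨_, isDecyclingSet_c4BoxProdC4DecyclingSet, by rw [Set.ncard_coe_finset]; rfl⟩
  refine le_antisymm (Nat.sInf_le hmem) (le_csInf ⟨6, hmem⟩ ?_)
  rintro k ⟨S, hS, rfl⟩
  exact six_le_ncard_of_isDecyclingSet_C4_boxProd_C4 hS
end
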